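/- For every ε > 0 there exists a constant C_ε > 0, depending only on ε, such that for every positive integer n the number of lattice points on the sphere of radius √n satisfies r₃(n) := |{p ∈ ℤ³ : |p|² = n}| ≤ C_ε n^{1/2 + ε}. -/

import Mathlib

noncomputable section

/-- Momentum lattice `ℤ³`. -/
abbrev Z3 := Fin 3 → ℤ

lemma divisor_bound (δ : ℝ) (hδ : 0 < δ) :
    ∃ C ≥ (1:ℝ), ∀ m : ℕ, m ≠ 0 → ((m.divisors.card : ℕ) : ℝ) ≤ C * (m:ℝ) ^ δ := by
  have hlog2 : 0 < Real.log 2 := Real.log_pos (by norm_num)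
  have hL : 0 < δ * Real.log 2 := by positivity
  set K : ℝ := 1 + 1 / (δ * Real.log 2) with hKdef
  have hK1 : 1 ≤ K := le_add_of_nonneg_right (by positivity)
  set B : ℝ := (2:ℝ) ^ (1/δ) with hBdef
  refine ⟨K ^ (⌊B⌋₊ + 1), one_le_pow₀ hK1, ?_⟩
  intro m hm
  -- pointwise key inequality
  have key : ∀ p ∈ m.primeFactors,
      ((m.factorization p + 1 : ℕ) : ℝ) ≤
        (if (p:ℝ) ≤ B then K else 1) * ((p:ℝ) ^ (m.factorization p : ℕ)) ^ δ := by
    intro p hp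
    have hpp : p.Prime := Nat.prime_of_mem_primeFactors hp
    have hp2 : (2:ℝ) ≤ (p:ℝ) := by exact_mod_cast hpp.two_le
    have hp0 : (0:ℝ) ≤ (p:ℝ) := by positivity
    set a : ℕ := m.factorization p with ha
    have hexp : ((p:ℝ) ^ (a : ℕ)) ^ δ = ((p:ℝ) ^ δ) ^ (a : ℕ) := by
      rw [← Real.rpow_natCast (p:ℝ) a, ← Real.rpow_mul hp0, mul_comm,
        Real.rpow_mul hp0, Real.rpow_natCast]
    rw [hexp]
    by_cases hcase : (p:ℝ) ≤ B
    · rw [if_pos hcase]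
      have h1 : (2:ℝ) ^ δ ≤ (p:ℝ) ^ δ := Real.rpow_le_rpow (by norm_num) hp2 hδ.le
      have h2 : Real.exp (δ * Real.log 2) = (2:ℝ) ^ δ := by
        rw [Real.rpow_def_of_pos (by norm_num), mul_comm]
      have h3 : ∀ j : ℕ, (1 + (j:ℝ) * (δ * Real.log 2)) ≤ ((2:ℝ) ^ δ) ^ j := by
        intro j
        induction j with
        | zero => simp
        | succ i ih =>
          have hpos : (0:ℝ) < (2:ℝ) ^ δ := Real.rpow_pos_of_pos (by norm_num) _
          have he : 1 + (δ * Real.log 2) ≤ (2:ℝ) ^ δ := by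
            rw [← h2]; linarith [Real.add_one_le_exp (δ * Real.log 2)]
          have hi0 : (0:ℝ) ≤ 1 + (i:ℝ) * (δ * Real.log 2) := by positivity
          calc (1 + ((i+1:ℕ):ℝ) * (δ * Real.log 2))
              ≤ (1 + (i:ℝ) * (δ * Real.log 2)) * (1 + (δ * Real.log 2)) := by
                push_cast; nlinarith [mul_pos hL hL, sq_nonneg (i:ℝ)]
            _ ≤ ((2:ℝ) ^ δ) ^ i * (2:ℝ) ^ δ := by
                apply mul_le_mul ih he (by positivity) (by positivity)
            _ = ((2:ℝ) ^ δ) ^ (i+1) := by ring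
      have h4 : (1 + (a:ℝ) * (δ * Real.log 2)) ≤ ((p:ℝ) ^ δ) ^ a := by
        refine (h3 a).trans ?_
        exact pow_le_pow_left₀ (by positivity) h1 a
      -- (a+1) ≤ K * (1 + a L)
      have h5 : ((a + 1 : ℕ) : ℝ) ≤ K * (1 + (a:ℝ) * (δ * Real.log 2)) := by
        push_cast
        have hinv : (1 / (δ * Real.log 2)) * ((a:ℝ) * (δ * Real.log 2)) = (a:ℝ) := by
          field_simp
        have ha0 : (0:ℝ) ≤ (a:ℝ) := Nat.cast_nonneg a
        have hexp2 : K * (1 + (a:ℝ)*(δ*Real.log 2)) = 1 + (a:ℝ)*(δ*Real.log 2)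
            + 1/(δ*Real.log 2) + (1/(δ*Real.log 2))*((a:ℝ)*(δ*Real.log 2)) := by
          rw [hKdef]; ring
        rw [hexp2, hinv]
        have h6 := one_div_nonneg.mpr hL.le
        linarith [mul_nonneg ha0 hL.le]
      refine h5.trans ?_
      have hK0 : (0:ℝ) ≤ K := by linarith
      exact mul_le_mul_of_nonneg_left h4 hK0
    · rw [if_neg hcase, one_mul]
      push_neg at hcase
      have h2 : (2:ℝ) ≤ (p:ℝ) ^ δ := by
        have : ((2:ℝ) ^ (1/δ)) ^ δ ≤ (p:ℝ) ^ δ :=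
          Real.rpow_le_rpow (by positivity) hcase.le hδ.le
        rwa [← Real.rpow_mul (by norm_num), one_div_mul_cancel hδ.ne', Real.rpow_one] at this
      have h3 : ((a+1:ℕ):ℝ) ≤ (2:ℝ)^(a:ℕ) := by
        exact_mod_cast Nat.lt_two_pow_self (n := a)
      refine h3.trans ?_
      exact pow_le_pow_left₀ (by norm_num) h2 a
  -- assemble
  have hd : ((m.divisors.card : ℕ) : ℝ) = ∏ p ∈ m.primeFactors, ((m.factorization p + 1 : ℕ) : ℝ) := by
    rw [Nat.card_divisors hm]; push_cast; rfl
  have hmprod : (m:ℝ) = ∏ p ∈ m.primeFactors, (p:ℝ) ^ (m.factorization p : ℕ) := by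
    conv_lhs => rw [← Nat.factorization_prod_pow_eq_self hm]
    rw [Nat.prod_factorization_eq_prod_primeFactors]
    push_cast; rfl
  have hmrpow : (m:ℝ) ^ δ = ∏ p ∈ m.primeFactors, ((p:ℝ) ^ (m.factorization p : ℕ)) ^ δ := by
    rw [hmprod, ← Real.finset_prod_rpow _ _ (fun i _ => by positivity) δ]
  rw [hd, hmrpow]
  calc ∏ p ∈ m.primeFactors, ((m.factorization p + 1 : ℕ) : ℝ)
      ≤ ∏ p ∈ m.primeFactors,
          (if (p:ℝ) ≤ B then K else 1) * ((p:ℝ) ^ (m.factorization p : ℕ)) ^ δ := by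
        refine Finset.prod_le_prod (fun i _ => by positivity) key
    _ = (∏ p ∈ m.primeFactors, (if (p:ℝ) ≤ B then K else 1)) *
          ∏ p ∈ m.primeFactors, ((p:ℝ) ^ (m.factorization p : ℕ)) ^ δ := by
        rw [Finset.prod_mul_distrib]
    _ ≤ K ^ (⌊B⌋₊ + 1) * ∏ p ∈ m.primeFactors, ((p:ℝ) ^ (m.factorization p : ℕ)) ^ δ := by
        apply mul_le_mul_of_nonneg_right _ (Finset.prod_nonneg fun i _ => by positivity)
        rw [Finset.prod_ite, Finset.prod_const, Finset.prod_const, one_pow, mul_one]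
        have hsub : m.primeFactors.filter (fun p : ℕ => (p:ℝ) ≤ B) ⊆ Finset.range (⌊B⌋₊ + 1) := by
          intro p hp
          simp only [Finset.mem_filter] at hp
          exact Finset.mem_range.mpr (Nat.lt_succ_of_le (Nat.le_floor hp.2))
        have hcard : (m.primeFactors.filter (fun p : ℕ => (p:ℝ) ≤ B)).card ≤ ⌊B⌋₊ + 1 := by
          simpa using Finset.card_le_card hsub
        exact pow_le_pow_right₀ hK1 hcard

def rho (k : ℕ) : ℕ :=
  ((Finset.range k).filter (fun v : ℕ => ((v : ZMod k))^2 = -1)).card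

lemma mem_rho_filter {k v : ℕ} (hv : v ∈ (Finset.range k).filter
    (fun v : ℕ => ((v : ZMod k))^2 = -1)) : v < k ∧ (k:ℤ) ∣ (v:ℤ)^2 + 1 := by
  simp only [Finset.mem_filter, Finset.mem_range] at hv
  refine ⟨hv.1, ?_⟩
  rw [← ZMod.intCast_zmod_eq_zero_iff_dvd]
  push_cast
  rw [hv.2]; ring

lemma rho_prime_pow {p a : ℕ} (hp : p.Prime) (ha : 1 ≤ a) : rho (p ^ a) ≤ 2 := by
  rcases eq_or_ne p 2 with rfl | hodd
  · rcases eq_or_lt_of_le ha with rfl | ha2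
    · calc rho (2^1) ≤ (Finset.range (2^1)).card := Finset.card_filter_le _ _
        _ = 2 := by simp
    · have hemp : ((Finset.range (2^a)).filter
          (fun v : ℕ => ((v : ZMod (2^a)))^2 = -1)) = ∅ := by
        rw [Finset.eq_empty_iff_forall_notMem]
        intro v hv
        obtain ⟨-, hdvd⟩ := mem_rho_filter hv
        have h4 : (4:ℤ) ∣ (v:ℤ)^2 + 1 := by
          refine dvd_trans ?_ hdvd
          have h22 : (2:ℤ)^2 ∣ (2:ℤ)^a := pow_dvd_pow 2 ha2
          have : ((2^a : ℕ) : ℤ) = (2:ℤ)^a := by push_cast; ring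
          rw [this]
          simpa using h22
        obtain ⟨c, hc⟩ := h4
        rcases Int.even_or_odd (v:ℤ) with ⟨u, hu⟩ | ⟨u, hu⟩
        · rw [hu] at hc
          have hc' : 4*u^2 + 1 = 4*c := by linarith [hc]
          generalize u^2 = A at hc'
          omega
        · rw [hu] at hc
          have hc' : 4*u^2 + 4*u + 2 = 4*c := by linarith [hc]
          generalize u^2 = A at hc'
          omega
      rw [rho, hemp]; simp
  · -- p odd
    set k : ℕ := p ^ a with hk
    set F := (Finset.range k).filter (fun v : ℕ => ((v : ZMod k))^2 = -1) with hF
    rcases F.eq_empty_or_nonempty with hemp | ⟨t, ht⟩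
    · rw [rho, ← hF, hemp]; simp
    · have hp' : Prime (p:ℤ) := Int.prime_iff_natAbs_prime.mpr (by simpa using hp)
      have hK0 : (0:ℤ) < (k:ℤ) := by
        have : 0 < k := pow_pos hp.pos a
        exact_mod_cast this
      have hkpow : ((k:ℤ)) = (p:ℤ)^a := by rw [hk]; push_cast; ring
      have hsub : F ⊆ {t, k - t} := by
        intro v hv
        obtain ⟨hvlt, hvd⟩ := mem_rho_filter (hF ▸ hv)
        obtain ⟨htlt, htd⟩ := mem_rho_filter (hF ▸ ht)
        have hkd : ((k:ℤ)) ∣ ((v:ℤ) - t) * ((v:ℤ) + t) := by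
          have heq : ((v:ℤ)-t)*((v:ℤ)+t) = ((v:ℤ)^2+1) - ((t:ℤ)^2+1) := by ring
          rw [heq]; exact dvd_sub hvd htd
        have hpdvd1 : (p:ℤ) ∣ (k:ℤ) := by rw [hkpow]; exact dvd_pow_self _ (by omega)
        have hkey : ¬ ((p:ℤ) ∣ ((v:ℤ) - t)) ∨ ¬ ((p:ℤ) ∣ ((v:ℤ) + t)) := by
          by_contra h
          rw [not_or, not_not, not_not] at h
          obtain ⟨h1, h2⟩ := h
          have h2v : (p:ℤ) ∣ 2*(v:ℤ) := by
            have hd := dvd_add h1 h2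
            have : ((v:ℤ) - t) + ((v:ℤ) + t) = 2*(v:ℤ) := by ring
            rwa [this] at hd
          have hpv : (p:ℤ) ∣ (v:ℤ) := by
            rcases hp'.dvd_mul.mp h2v with h | h
            · exfalso
              have : p ∣ 2 := by exact_mod_cast h
              exact hodd ((Nat.prime_dvd_prime_iff_eq hp Nat.prime_two).mp this)
            · exact h
          have hone : (p:ℤ) ∣ 1 := by
            have hsq : (p:ℤ) ∣ (v:ℤ)^2 := hpv.pow two_ne_zero
            have hk1 : (p:ℤ) ∣ (v:ℤ)^2 + 1 := hpdvd1.trans hvd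
            have hfin := dvd_sub hk1 hsq
            simpa using hfin
          exact hp'.not_dvd_one hone
        have hmem : (v:ℤ) = t ∨ (v:ℤ) + t = k := by
          rcases hkey with h | h
          · -- coprime to v - t, so k ∣ v + t
            have hco : IsCoprime ((k:ℤ)) ((v:ℤ) - t) := by
              rw [hkpow]
              exact (IsCoprime.pow_left (((hp'.coprime_iff_not_dvd)).mpr h))
            have hdvd : (k:ℤ) ∣ (v:ℤ) + t := hco.dvd_of_dvd_mul_left hkd
            obtain ⟨c, hc⟩ := hdvd
            have hc2 : c < 2 := by nlinarith
            have hc0 : 0 ≤ c := by nlinarith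
            interval_cases c
            · left
              have : (v:ℤ) + t = 0 := by rw [hc]; ring
              omega
            · right; rw [hc]; ring
          · -- coprime to v + t, so k ∣ v - t
            have hco : IsCoprime ((k:ℤ)) ((v:ℤ) + t) := by
              rw [hkpow]
              exact (IsCoprime.pow_left (((hp'.coprime_iff_not_dvd)).mpr h))
            have hdvd : (k:ℤ) ∣ (v:ℤ) - t := hco.dvd_of_dvd_mul_right hkd
            obtain ⟨c, hc⟩ := hdvd
            have hc1 : c < 1 := by nlinarith
            have hc0 : -1 < c := by nlinarith
            have : c = 0 := by omega
            rw [this, mul_zero] at hc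
            left; omega
        simp only [Finset.mem_insert, Finset.mem_singleton]
        omega
      calc F.card ≤ ({t, k - t} : Finset ℕ).card := Finset.card_le_card hsub
        _ ≤ 2 := by
            refine (Finset.card_insert_le _ _).trans ?_
            simp

lemma rho_mul_coprime {k l : ℕ} (hk : k ≠ 0) (hl : l ≠ 0) (h : Nat.Coprime k l) :
    rho (k * l) ≤ rho k * rho l := by
  rw [rho, rho, rho, ← Finset.card_product]
  apply Finset.card_le_card_of_injOn (fun v => (v % k, v % l))
  · intro v hv
    simp only [Finset.mem_coe, Finset.mem_filter, Finset.mem_range] at hv ⊢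
    obtain ⟨hvlt, hveq⟩ := hv
    simp only [Finset.mem_product, Finset.mem_filter, Finset.mem_range]
    have cast_eq : ∀ (d : ℕ) (hd : d ∣ k * l), (((v % d : ℕ) : ZMod d))^2 = -1 → True := fun _ _ _ => trivial
    refine ⟨⟨Nat.mod_lt _ (Nat.pos_of_ne_zero hk), ?_⟩,
            ⟨Nat.mod_lt _ (Nat.pos_of_ne_zero hl), ?_⟩⟩
    · have hhom : ((v % k : ℕ) : ZMod k) = ((v:ℕ) : ZMod k) := ZMod.natCast_mod v k
      rw [hhom]
      have : ((v : ZMod k)) = (ZMod.castHom (dvd_mul_right k l) (ZMod k)) ((v : ZMod (k*l))) := by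
        simp
      rw [this, ← map_pow, hveq, map_neg, map_one]
    · have hhom : ((v % l : ℕ) : ZMod l) = ((v:ℕ) : ZMod l) := ZMod.natCast_mod v l
      rw [hhom]
      have : ((v : ZMod l)) = (ZMod.castHom (dvd_mul_left l k) (ZMod l)) ((v : ZMod (k*l))) := by
        simp
      rw [this, ← map_pow, hveq, map_neg, map_one]
  · intro v hv w hw hvw
    simp only [Finset.mem_coe, Finset.mem_filter, Finset.mem_range] at hv hw
    obtain ⟨h1, h2⟩ := Prod.mk.injEq _ _ _ _ ▸ hvw
    have hmod : v % (k * l) = w % (k * l) :=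
      (Nat.modEq_and_modEq_iff_modEq_mul h).mp ⟨h1, h2⟩
    rwa [Nat.mod_eq_of_lt hv.1, Nat.mod_eq_of_lt hw.1] at hmod

lemma rho_one : rho 1 = 1 := by
  rw [rho]
  rw [Finset.filter_true_of_mem (fun x _ => Subsingleton.elim _ _)]
  simp

lemma rho_le_card_divisors : ∀ k : ℕ, k ≠ 0 → rho k ≤ k.divisors.card := by
  intro k
  induction k using Nat.recOnPosPrimePosCoprime with
  | prime_pow p n hpp hn =>
    intro _
    have hcard : (p^n).divisors.card = n + 1 := by
      rw [Nat.divisors_prime_pow hpp]; simp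
    refine (rho_prime_pow hpp hn).trans ?_
    omega
  | zero => intro h; exact absurd rfl h
  | one => intro _; simp [rho_one]
  | coprime a b ha hb hab iha ihb =>
    intro _
    have ha0 : a ≠ 0 := by omega
    have hb0 : b ≠ 0 := by omega
    calc rho (a * b) ≤ rho a * rho b := rho_mul_coprime ha0 hb0 hab
      _ ≤ a.divisors.card * b.divisors.card :=
          Nat.mul_le_mul (iha ha0) (ihb hb0)
      _ = (a * b).divisors.card := (hab.card_divisors_mul).symm

lemma unit_of_prim {k : ℕ} {a b : ℤ} (h : a^2 + b^2 = (k:ℤ)) (hg : Int.gcd a b = 1) :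
    IsUnit ((b : ZMod k)) := by
  have hco : IsCoprime a b := Int.isCoprime_iff_gcd_eq_one.mpr hg
  have hco2 : IsCoprime b ((k:ℤ)) := by
    rw [← h]
    have h1 : IsCoprime b (a^2) := (hco.symm.pow_right)
    have h2 : IsCoprime b (a^2 + b*b) := h1.add_mul_left_right b
    convert h2 using 2; ring
  have hgcd : Nat.Coprime b.natAbs k := by
    have h2 := Int.isCoprime_iff_gcd_eq_one.mp hco2
    simpa [Int.gcd, Int.natAbs_natCast] using h2
  have hu : IsUnit ((b.natAbs : ℕ) : ZMod k) := (ZMod.isUnit_iff_coprime _ _).mpr hgcd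
  rcases Int.natAbs_eq b with hb | hb
  · rw [hb, Int.cast_natCast]; exact hu
  · rw [hb, Int.cast_neg, Int.cast_natCast]; exact hu.neg

lemma s_mul {k : ℕ} {a b : ℤ} (h : a^2 + b^2 = (k:ℤ)) (hg : Int.gcd a b = 1) :
    ((a : ZMod k) * (b : ZMod k)⁻¹) * (b : ZMod k) = (a : ZMod k) ∧
    ((a : ZMod k) * (b : ZMod k)⁻¹)^2 = -1 := by
  have hu := unit_of_prim h hg
  have hmul : (b : ZMod k)⁻¹ * (b : ZMod k) = 1 := ZMod.inv_mul_of_unit _ hu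
  constructor
  · rw [mul_assoc, hmul, mul_one]
  · have hk0 : ((k:ℕ) : ZMod k) = 0 := ZMod.natCast_self k
    have hab : (a : ZMod k)^2 = -((b : ZMod k))^2 := by
      have : ((a^2 + b^2 : ℤ) : ZMod k) = 0 := by
        rw [h]; push_cast [hk0]; simp
      push_cast at this
      linear_combination this
    calc ((a : ZMod k) * (b : ZMod k)⁻¹)^2 = (a:ZMod k)^2 * ((b:ZMod k)⁻¹)^2 := by ring
      _ = -(((b:ZMod k)) * ((b:ZMod k)⁻¹))^2 := by rw [hab]; ring
      _ = -1 := by rw [ZMod.mul_inv_of_unit _ hu]; simp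

lemma fiber_core {k : ℕ} (hk : k ≠ 0) {a b c d : ℤ}
    (h1 : a^2 + b^2 = (k:ℤ)) (h2 : c^2 + d^2 = (k:ℤ))
    (hg1 : Int.gcd a b = 1) (hg2 : Int.gcd c d = 1)
    (hs : (a : ZMod k) * (b : ZMod k)⁻¹ = (c : ZMod k) * (d : ZMod k)⁻¹) :
    (c = a ∧ d = b) ∨ (c = -a ∧ d = -b) ∨ (c = -b ∧ d = a) ∨ (c = b ∧ d = -a) := by
  obtain ⟨ha1, hsq⟩ := s_mul h1 hg1
  obtain ⟨hc1, -⟩ := s_mul h2 hg2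
  set s : ZMod k := (a : ZMod k) * (b : ZMod k)⁻¹ with hsdef
  rw [← hs] at hc1
  -- x := a*c + b*d, y := a*d - b*c are both ≡ 0 mod k
  have hx0 : ((a*c + b*d : ℤ) : ZMod k) = 0 := by
    push_cast
    rw [← ha1, ← hc1]
    linear_combination ((b:ZMod k) * (d:ZMod k)) * hsq
  have hy0 : ((a*d - b*c : ℤ) : ZMod k) = 0 := by
    push_cast
    rw [← ha1, ← hc1]
    ring
  rw [ZMod.intCast_zmod_eq_zero_iff_dvd] at hx0 hy0
  obtain ⟨X, hX⟩ := hx0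
  obtain ⟨Y, hY⟩ := hy0
  have hk0 : ((k:ℤ)) ≠ 0 := by exact_mod_cast hk
  have hXY : X^2 + Y^2 = 1 := by
    have hident : (a*c + b*d)^2 + (a*d - b*c)^2 = (k:ℤ)^2 := by
      rw [show (a*c + b*d)^2 + (a*d - b*c)^2 = (a^2+b^2)*(c^2+d^2) from by ring, h1, h2]
      ring
    rw [hX, hY] at hident
    have : (k:ℤ)^2 * (X^2 + Y^2) = (k:ℤ)^2 * 1 := by linear_combination hident
    exact mul_left_cancel₀ (pow_ne_zero 2 hk0) this
  have hXb : X = 0 ∨ X = 1 ∨ X = -1 := by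
    have hb1 : -1 ≤ X := by nlinarith [sq_nonneg Y, sq_nonneg (X+1)]
    have hb2 : X ≤ 1 := by nlinarith [sq_nonneg Y, sq_nonneg (X-1)]
    omega
  have hYb : Y = 0 ∨ Y = 1 ∨ Y = -1 := by
    have hb1 : -1 ≤ Y := by nlinarith [sq_nonneg X, sq_nonneg (Y+1)]
    have hb2 : Y ≤ 1 := by nlinarith [sq_nonneg X, sq_nonneg (Y-1)]
    omega
  have hc : (k:ℤ) * c = (k:ℤ) * (X*a - Y*b) := by
    have : (k:ℤ) * c = a * (a*c + b*d) - b * (a*d - b*c) := by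
      rw [show a * (a*c + b*d) - b * (a*d - b*c) = (a^2+b^2) * c from by ring, h1]
    rw [this, hX, hY]; ring
  have hd : (k:ℤ) * d = (k:ℤ) * (X*b + Y*a) := by
    have : (k:ℤ) * d = b * (a*c + b*d) + a * (a*d - b*c) := by
      rw [show b * (a*c + b*d) + a * (a*d - b*c) = (a^2+b^2) * d from by ring, h1]
    rw [this, hX, hY]; ring
  have hceq : c = X*a - Y*b := mul_left_cancel₀ hk0 hc
  have hdeq : d = X*b + Y*a := mul_left_cancel₀ hk0 hd
  rcases hXb with hX0 | hX0 | hX0 <;> rcases hYb with hY0 | hY0 | hY0 <;>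
      subst hX0 <;> subst hY0 <;>
      first
        | (rw [hceq, hdeq]; norm_num; done)
        | (exfalso; norm_num at hXY)

-- === new material ===

def S2 (m : ℕ) : Finset (ℤ × ℤ) :=
  ((Finset.Icc (-(m:ℤ)) m) ×ˢ (Finset.Icc (-(m:ℤ)) m)).filter
    (fun q => q.1^2 + q.2^2 = (m:ℤ))

lemma mem_S2_iff {m : ℕ} {q : ℤ × ℤ} : q ∈ S2 m ↔ q.1^2 + q.2^2 = (m:ℤ) := by
  constructor
  · exact fun h => (Finset.mem_filter.mp h).2
  · intro h
    have hm0 : (0:ℤ) ≤ (m:ℤ) := Int.natCast_nonneg m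
    refine Finset.mem_filter.mpr ⟨Finset.mem_product.mpr ⟨?_, ?_⟩, h⟩ <;>
      rw [Finset.mem_Icc] <;> constructor <;>
      nlinarith [sq_nonneg q.1, sq_nonneg q.2, sq_nonneg (q.1-1), sq_nonneg (q.1+1),
        sq_nonneg (q.2-1), sq_nonneg (q.2+1)]

def sval (k : ℕ) (a b : ℤ) : ℕ := (((a : ZMod k) * (b : ZMod k)⁻¹ : ZMod k)).val

def Phi (m : ℕ) (q : ℤ × ℤ) : ℕ × ℕ :=
  ⟨Int.gcd q.1 q.2,
   sval (m / (Int.gcd q.1 q.2)^2) (q.1 / Int.gcd q.1 q.2) (q.2 / Int.gcd q.1 q.2)⟩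

def target (m : ℕ) : Finset (ℕ × ℕ) :=
  (m.divisors.filter (fun g => g^2 ∣ m)).biUnion (fun g =>
    ((Finset.range (m / g^2)).filter (fun v : ℕ => ((v : ZMod (m / g^2)))^2 = -1)).image
      (fun v => (g, v)))

lemma decomp {m : ℕ} (hm : m ≠ 0) {a b : ℤ} (h : a^2 + b^2 = (m:ℤ)) :
    Int.gcd a b ≠ 0 ∧ (Int.gcd a b)^2 ∣ m ∧ m / (Int.gcd a b)^2 ≠ 0 ∧
      (a / Int.gcd a b)^2 + (b / Int.gcd a b)^2 = ((m / (Int.gcd a b)^2 : ℕ) : ℤ) ∧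
      Int.gcd (a / Int.gcd a b) (b / Int.gcd a b) = 1 := by
  set g : ℕ := Int.gcd a b with hgdef
  have hg0 : g ≠ 0 := by
    intro h0
    obtain ⟨ha, hb⟩ := Int.gcd_eq_zero_iff.mp h0
    rw [ha, hb] at h
    simp at h
    exact hm (by exact_mod_cast h.symm)
  have hga : (g:ℤ) ∣ a := Int.gcd_dvd_left _ _
  have hgb : (g:ℤ) ∣ b := Int.gcd_dvd_right _ _
  have ha : (g:ℤ) * (a / g) = a := Int.mul_ediv_cancel' hga
  have hb : (g:ℤ) * (b / g) = b := Int.mul_ediv_cancel' hgb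
  have hsq : ((g:ℤ))^2 * ((a/(g:ℤ))^2 + (b/(g:ℤ))^2) = (m:ℤ) := by
    calc ((g:ℤ))^2 * ((a/(g:ℤ))^2 + (b/(g:ℤ))^2)
        = ((g:ℤ)*(a/(g:ℤ)))^2 + ((g:ℤ)*(b/(g:ℤ)))^2 := by ring
      _ = a^2 + b^2 := by rw [ha, hb]
      _ = (m:ℤ) := h
  have hdvd : g^2 ∣ m := by
    have : ((g^2 : ℕ) : ℤ) ∣ (m:ℤ) := ⟨(a/(g:ℤ))^2 + (b/(g:ℤ))^2, by push_cast; linarith [hsq]⟩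
    exact_mod_cast this
  have hmk : m = g^2 * (m / g^2) := (Nat.mul_div_cancel' hdvd).symm
  have hk0 : m / g^2 ≠ 0 := by
    intro h0
    rw [h0, mul_zero] at hmk
    exact hm hmk
  refine ⟨hg0, hdvd, hk0, ?_, ?_⟩
  · have hcast : (m:ℤ) = ((g:ℤ))^2 * ((m / g^2 : ℕ) : ℤ) := by
      conv_lhs => rw [hmk]
      push_cast; ring
    rw [hcast] at hsq
    have hgz : ((g:ℤ))^2 ≠ 0 := by
      have : (g:ℤ) ≠ 0 := by exact_mod_cast hg0
      positivity
    exact mul_left_cancel₀ hgz hsq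
  · exact Int.gcd_div_gcd_div_gcd (Nat.pos_of_ne_zero hg0)

lemma S2_card_le {m : ℕ} (hm : m ≠ 0) : (S2 m).card ≤ 4 * m.divisors.card ^ 2 := by
  have hmaps : ∀ q ∈ S2 m, Phi m q ∈ target m := by
    intro q hq
    have h := mem_S2_iff.mp hq
    obtain ⟨hg0, hdvd, hk0, hprim, hgcd1⟩ := decomp hm h
    set g : ℕ := Int.gcd q.1 q.2 with hgdef
    set k : ℕ := m / g^2 with hkdef
    haveI : NeZero k := ⟨hk0⟩
    refine Finset.mem_biUnion.mpr ⟨g, ?_, ?_⟩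
    · refine Finset.mem_filter.mpr ⟨Nat.mem_divisors.mpr ⟨?_, hm⟩, hdvd⟩
      exact dvd_trans (dvd_pow_self g two_ne_zero) hdvd
    · refine Finset.mem_image.mpr ⟨sval k (q.1/(g:ℤ)) (q.2/(g:ℤ)), ?_, rfl⟩
      rw [Finset.mem_filter, Finset.mem_range]
      have hs2 := (s_mul hprim hgcd1).2
      have hval : ((sval k (q.1/(g:ℤ)) (q.2/(g:ℤ)) : ℕ) : ZMod k)
          = ((q.1/(g:ℤ) : ℤ) : ZMod k) * ((q.2/(g:ℤ) : ℤ) : ZMod k)⁻¹ :=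
        ZMod.natCast_rightInverse _
      exact ⟨ZMod.val_lt _, by rw [hval]; exact hs2⟩
  have hfib : ∀ t ∈ target m, ((S2 m).filter (fun q => Phi m q = t)).card ≤ 4 := by
    intro t _
    rcases ((S2 m).filter (fun q => Phi m q = t)).eq_empty_or_nonempty with he | ⟨q0, hq0⟩
    · rw [he]; simp
    · have hsub : (S2 m).filter (fun q => Phi m q = t) ⊆
          ({q0, (-q0.1, -q0.2), (-q0.2, q0.1), (q0.2, -q0.1)} : Finset (ℤ × ℤ)) := by
        intro q hq
        refine ?_
        simp only [Finset.mem_filter] at hq hq0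
        obtain ⟨hqS, hqt⟩ := hq
        obtain ⟨hq0S, hq0t⟩ := hq0
        have h1 := mem_S2_iff.mp hq0S
        have h2 := mem_S2_iff.mp hqS
        obtain ⟨hg0, hdvd, hk0, hprim1, hgcd1⟩ := decomp hm h1
        obtain ⟨hg0', hdvd', hk0', hprim2, hgcd2⟩ := decomp hm h2
        rw [← hq0t] at hqt
        have hgeq : Int.gcd q.1 q.2 = Int.gcd q0.1 q0.2 := congrArg Prod.fst hqt
        set g : ℕ := Int.gcd q0.1 q0.2 with hgdef
        have hveq : sval (m / (Int.gcd q.1 q.2)^2) (q.1 / (Int.gcd q.1 q.2 : ℤ))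
              (q.2 / (Int.gcd q.1 q.2 : ℤ))
            = sval (m / g^2) (q0.1 / (g:ℤ)) (q0.2 / (g:ℤ)) := congrArg Prod.snd hqt
        rw [hgeq] at hveq hprim2 hgcd2 hk0' hdvd'
        set k : ℕ := m / g^2 with hkdef
        haveI : NeZero k := ⟨hk0⟩
        have hseq : ((q0.1/(g:ℤ) : ℤ) : ZMod k) * ((q0.2/(g:ℤ) : ℤ) : ZMod k)⁻¹
            = ((q.1/(g:ℤ) : ℤ) : ZMod k) * ((q.2/(g:ℤ) : ℤ) : ZMod k)⁻¹ := by
          have e1 : ((sval k (q.1/(g:ℤ)) (q.2/(g:ℤ)) : ℕ) : ZMod k)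
              = ((q.1/(g:ℤ) : ℤ) : ZMod k) * ((q.2/(g:ℤ) : ℤ) : ZMod k)⁻¹ :=
            ZMod.natCast_rightInverse _
          have e2 : ((sval k (q0.1/(g:ℤ)) (q0.2/(g:ℤ)) : ℕ) : ZMod k)
              = ((q0.1/(g:ℤ) : ℤ) : ZMod k) * ((q0.2/(g:ℤ) : ℤ) : ZMod k)⁻¹ :=
            ZMod.natCast_rightInverse _
          rw [← e1, ← e2, hveq]
        have hcases := fiber_core hk0 hprim1 hprim2 hgcd1 hgcd2 hseq
        have hga : ((g:ℕ):ℤ) ∣ q0.1 := Int.gcd_dvd_left _ _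
        have hgb : ((g:ℕ):ℤ) ∣ q0.2 := Int.gcd_dvd_right _ _
        have hga' : ((g:ℕ):ℤ) ∣ q.1 := hgeq ▸ (Int.gcd_dvd_left q.1 q.2)
        have hgb' : ((g:ℕ):ℤ) ∣ q.2 := hgeq ▸ (Int.gcd_dvd_right q.1 q.2)
        have ea : (g:ℤ) * (q0.1 / g) = q0.1 := Int.mul_ediv_cancel' hga
        have eb : (g:ℤ) * (q0.2 / g) = q0.2 := Int.mul_ediv_cancel' hgb
        have ec : (g:ℤ) * (q.1 / g) = q.1 := Int.mul_ediv_cancel' hga'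
        have ed : (g:ℤ) * (q.2 / g) = q.2 := Int.mul_ediv_cancel' hgb'
        simp only [Finset.mem_insert, Finset.mem_singleton]
        rcases hcases with ⟨hc, hd⟩ | ⟨hc, hd⟩ | ⟨hc, hd⟩ | ⟨hc, hd⟩
        · left
          have : q = q0 := Prod.ext (by rw [← ec, hc, ea]) (by rw [← ed, hd, eb])
          exact this
        · right; left
          exact Prod.ext (by rw [← ec, hc, mul_neg, ea]) (by rw [← ed, hd, mul_neg, eb])
        · right; right; left
          exact Prod.ext (by rw [← ec, hc, mul_neg, eb]) (by rw [← ed, hd, ea])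
        · right; right; right
          exact Prod.ext (by rw [← ec, hc, eb]) (by rw [← ed, hd, mul_neg, ea])
      refine le_trans (Finset.card_le_card hsub) ?_
      refine le_trans (Finset.card_insert_le _ _) ?_
      refine le_trans (Nat.succ_le_succ (Finset.card_insert_le _ _)) ?_
      refine le_trans (Nat.succ_le_succ (Nat.succ_le_succ (Finset.card_insert_le _ _))) ?_
      simp
  have hmain := Finset.card_le_mul_card_image_of_maps_to hmaps 4 hfib
  refine hmain.trans ?_
  have htarget : (target m).card ≤ m.divisors.card * m.divisors.card := by
    refine le_trans (Finset.card_biUnion_le) ?_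
    have hbound : ∀ g ∈ m.divisors.filter (fun g => g^2 ∣ m),
        (((Finset.range (m / g^2)).filter
          (fun v : ℕ => ((v : ZMod (m / g^2)))^2 = -1)).image (fun v => (g, v))).card
          ≤ m.divisors.card := by
      intro g hg
      obtain ⟨hgd, hgsq⟩ := Finset.mem_filter.mp hg
      have hk0 : m / g^2 ≠ 0 := by
        intro h0
        have hmm := Nat.mul_div_cancel' hgsq
        rw [h0, mul_zero] at hmm
        exact hm hmm.symm
      have hkdvd : m / g^2 ∣ m := ⟨g^2, by rw [mul_comm]; exact (Nat.mul_div_cancel' hgsq).symm⟩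
      refine le_trans (Finset.card_image_le) ?_
      refine le_trans (rho_le_card_divisors _ hk0) ?_
      exact Finset.card_le_card (Nat.divisors_subset_of_dvd hm hkdvd)
    refine le_trans (Finset.sum_le_card_nsmul _ _ _ hbound) ?_
    rw [smul_eq_mul]
    exact Nat.mul_le_mul_right _ (Finset.card_le_card (Finset.filter_subset _ _))
  calc 4 * (target m).card ≤ 4 * (m.divisors.card * m.divisors.card) :=
        Nat.mul_le_mul_left _ htarget
    _ = 4 * m.divisors.card ^ 2 := by ring

/-- **Lattice points on spheres.** For every `ε > 0` there is `C_ε > 0`, depending only on `ε`,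
such that for every positive integer `n`,
`r₃(n) = |{p ∈ ℤ³ : |p|² = n}| ≤ C_ε n^{1/2 + ε}`. -/
theorem lattice_points_on_sphere (ε : ℝ) (hε : 0 < ε) :
    ∃ C > (0 : ℝ), ∀ n : ℕ, 0 < n →
      ({p : Z3 | (∑ i, (p i) ^ 2) = (n : ℤ)}.ncard : ℝ) ≤ C * (n : ℝ) ^ ((1 : ℝ) / 2 + ε) := by
  obtain ⟨D, hD1, hDb⟩ := divisor_bound (ε/2) (by positivity)
  have hD0 : (0:ℝ) < D := lt_of_lt_of_le one_pos hD1
  refine ⟨12 * D^2, by positivity, ?_⟩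
  intro n hn
  set s : ℕ := Nat.sqrt n with hsdef
  set F3 : Finset Z3 := (Fintype.piFinset fun _ : Fin 3 =>
    Finset.Icc (-(s:ℤ)) (s:ℤ)).filter (fun p => ∑ i, (p i)^2 = (n:ℤ)) with hF3
  -- the set equals the finset
  have hset : {p : Z3 | (∑ i, (p i) ^ 2) = (n : ℤ)} = ↑F3 := by
    ext p
    simp only [Set.mem_setOf_eq, hF3, Finset.coe_filter, Fintype.mem_piFinset,
      Finset.mem_Icc, Set.mem_setOf_eq]
    constructor
    · intro h
      refine ⟨fun i => ?_, h⟩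
      have hterm : (p i)^2 ≤ (n:ℤ) := by
        rw [← h]
        exact Finset.single_le_sum (f := fun j => (p j)^2) (fun j _ => sq_nonneg _)
          (Finset.mem_univ i)
      have habs : (p i).natAbs ≤ s := by
        rw [hsdef, Nat.le_sqrt]
        have h2 : (((p i).natAbs : ℤ)) * (((p i).natAbs : ℤ)) ≤ (n:ℤ) := by
          rw [Int.natAbs_mul_self']; nlinarith [hterm]
        exact_mod_cast h2
      have : ((p i).natAbs : ℤ) ≤ (s:ℤ) := by exact_mod_cast habs
      rcases Int.natAbs_eq (p i) with he | he <;> rw [he] <;> omega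
    · exact fun h => h.2
  rw [hset, Set.ncard_coe_finset]
  -- injection into a biUnion
  set T : Finset (ℤ × ℤ × ℤ) := (Finset.Icc (-(s:ℤ)) (s:ℤ)).biUnion (fun a =>
    (S2 ((n:ℤ) - a^2).toNat).image (fun q => (a, q.1, q.2))) with hT
  have hcard1 : F3.card ≤ T.card := by
    apply Finset.card_le_card_of_injOn (fun p => (p 0, p 1, p 2))
    · intro p hp
      simp only [hF3, Finset.mem_coe, Finset.mem_filter, Fintype.mem_piFinset] at hp
      obtain ⟨hbox, hsum⟩ := hp
      refine Finset.mem_biUnion.mpr ⟨p 0, hbox 0, Finset.mem_image.mpr ⟨(p 1, p 2), ?_, rfl⟩⟩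
      rw [mem_S2_iff]
      have h0 : (p 0)^2 ≤ (n:ℤ) := by
        rw [← hsum]
        refine Finset.single_le_sum (f := fun j => (p j)^2) (fun j _ => sq_nonneg _)
          (Finset.mem_univ 0) |>.trans ?_
        exact le_refl _
      have : (((n:ℤ) - (p 0)^2).toNat : ℤ) = (n:ℤ) - (p 0)^2 :=
        Int.toNat_of_nonneg (by omega)
      rw [this]
      rw [Fin.sum_univ_three] at hsum
      simp only []
      linarith [hsum]
    · intro p hp p' hp' he
      simp only [Prod.mk.injEq] at he
      funext i
      fin_cases i
      · exact he.1
      · exact he.2.1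
      · exact he.2.2
  -- bound T.card
  have hnR : (0:ℝ) < (n:ℝ) := by exact_mod_cast hn
  have hone_le : (1:ℝ) ≤ (n:ℝ) := by exact_mod_cast hn
  have hrpow_pos : (0:ℝ) < (n:ℝ) ^ (ε:ℝ) := Real.rpow_pos_of_pos hnR _
  have hone_le_rpow : (1:ℝ) ≤ (n:ℝ) ^ (ε:ℝ) := Real.one_le_rpow hone_le hε.le
  have hS2bound : ∀ a : ℤ, a ∈ Finset.Icc (-(s:ℤ)) (s:ℤ) →
      (((S2 ((n:ℤ) - a^2).toNat).card : ℝ)) ≤ 4 * D^2 * (n:ℝ) ^ (ε:ℝ) := by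
    intro a _
    set m' : ℕ := ((n:ℤ) - a^2).toNat with hm'
    have hm'n : m' ≤ n := by
      have ha2 : (0:ℤ) ≤ a^2 := sq_nonneg a
      rw [hm']; omega
    rcases eq_or_ne m' 0 with h0 | h0
    · rw [h0]
      have : (S2 0).card ≤ 1 := by
        refine le_trans (Finset.card_filter_le _ _) ?_
        simp
      have h1 : ((S2 0).card : ℝ) ≤ 1 := by exact_mod_cast this
      refine h1.trans ?_
      nlinarith [hone_le_rpow, sq_nonneg D]
    · have hc := S2_card_le h0
      have hcR : ((S2 m').card : ℝ) ≤ 4 * ((m'.divisors.card : ℕ) : ℝ)^2 := by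
        exact_mod_cast hc
      refine hcR.trans ?_
      have hdb := hDb m' h0
      have hm'pos : (0:ℝ) < (m':ℝ) := by
        have : 0 < m' := Nat.pos_of_ne_zero h0
        exact_mod_cast this
      have hsq : ((m'.divisors.card : ℕ) : ℝ)^2 ≤ (D * (m':ℝ) ^ (ε/2))^2 :=
        pow_le_pow_left₀ (Nat.cast_nonneg _) hdb 2
      refine (mul_le_mul_of_nonneg_left hsq (by norm_num : (0:ℝ) ≤ 4)).trans ?_
      have hexp : (D * (m':ℝ) ^ (ε/2))^2 = D^2 * (m':ℝ) ^ (ε:ℝ) := by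
        rw [mul_pow, ← Real.rpow_natCast ((m':ℝ) ^ (ε/2)) 2, ← Real.rpow_mul hm'pos.le]
        norm_num
      rw [hexp]
      have hmono : (m':ℝ) ^ (ε:ℝ) ≤ (n:ℝ) ^ (ε:ℝ) :=
        Real.rpow_le_rpow hm'pos.le (by exact_mod_cast hm'n) hε.le
      nlinarith [sq_nonneg D]
  have hTcard : ((T.card : ℕ) : ℝ) ≤ ((2*s+1 : ℕ) : ℝ) * (4 * D^2 * (n:ℝ) ^ (ε:ℝ)) := by
    have h1 : T.card ≤ ∑ a ∈ Finset.Icc (-(s:ℤ)) (s:ℤ),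
        ((S2 ((n:ℤ) - a^2).toNat).image (fun q : ℤ × ℤ => (a, q.1, q.2))).card :=
      Finset.card_biUnion_le
    have h2 : ∀ a ∈ Finset.Icc (-(s:ℤ)) (s:ℤ),
        (((S2 ((n:ℤ) - a^2).toNat).image (fun q : ℤ × ℤ => (a, q.1, q.2))).card : ℝ)
        ≤ 4 * D^2 * (n:ℝ) ^ (ε:ℝ) := by
      intro a ha
      refine le_trans ?_ (hS2bound a ha)
      exact_mod_cast Finset.card_image_le
    calc ((T.card : ℕ) : ℝ) ≤ ∑ a ∈ Finset.Icc (-(s:ℤ)) (s:ℤ),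
          (((S2 ((n:ℤ) - a^2).toNat).image (fun q : ℤ × ℤ => (a, q.1, q.2))).card : ℝ) := by
          exact_mod_cast h1
      _ ≤ (Finset.Icc (-(s:ℤ)) (s:ℤ)).card • (4 * D^2 * (n:ℝ) ^ (ε:ℝ)) :=
          Finset.sum_le_card_nsmul _ _ _ h2
      _ = ((2*s+1 : ℕ) : ℝ) * (4 * D^2 * (n:ℝ) ^ (ε:ℝ)) := by
          rw [nsmul_eq_mul]
          have hic : (Finset.Icc (-(s:ℤ)) (s:ℤ)).card = 2*s+1 := by
            rw [Int.card_Icc]; omega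
          rw [hic]
  -- sqrt bound
  have hsqrt : ((s:ℕ) : ℝ) ≤ (n:ℝ) ^ ((1:ℝ)/2) := by
    rw [← Real.sqrt_eq_rpow]
    refine (Real.le_sqrt (Nat.cast_nonneg s) hnR.le).mpr ?_
    exact_mod_cast Nat.sqrt_le' n
  have hhalf_pos : (1:ℝ) ≤ (n:ℝ) ^ ((1:ℝ)/2) := Real.one_le_rpow hone_le (by norm_num)
  have hfinal : ((F3.card : ℕ) : ℝ) ≤ 12 * D^2 * (n:ℝ) ^ ((1:ℝ)/2 + ε) := by
    have hc1 : ((F3.card : ℕ) : ℝ) ≤ ((T.card : ℕ) : ℝ) := by exact_mod_cast hcard1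
    refine hc1.trans (hTcard.trans ?_)
    have hcount : ((2*s+1 : ℕ) : ℝ) ≤ 3 * (n:ℝ) ^ ((1:ℝ)/2) := by
      push_cast
      linarith [hsqrt, hhalf_pos]
    have hsplit : (n:ℝ) ^ ((1:ℝ)/2 + ε) = (n:ℝ) ^ ((1:ℝ)/2) * (n:ℝ) ^ (ε:ℝ) :=
      Real.rpow_add hnR _ _
    rw [hsplit]
    have h4 : (0:ℝ) ≤ 4 * D^2 * (n:ℝ) ^ (ε:ℝ) := by positivity
    calc ((2*s+1 : ℕ) : ℝ) * (4 * D^2 * (n:ℝ) ^ (ε:ℝ))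
        ≤ (3 * (n:ℝ) ^ ((1:ℝ)/2)) * (4 * D^2 * (n:ℝ) ^ (ε:ℝ)) :=
          mul_le_mul_of_nonneg_right hcount h4
      _ = 12 * D^2 * ((n:ℝ) ^ ((1:ℝ)/2) * (n:ℝ) ^ (ε:ℝ)) := by ring
  exact hfinal

end
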